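/- For any subset A ⊆ X, the polar transform of the Minkowski functional μ_A equals the Minkowski functional of the polar set: (μ_A)° = μ_{A°}. -/
import Mathlib


open scoped Pointwise ENNReal

/-- The Minkowski functional of a set `A`, with values in `[0,∞]` and `inf ∅ = +∞`. -/
noncomputable def mink {X : Type*} [AddCommGroup X] [Module ℝ X] (A : Set X) (x : X) : ℝ≥0∞ :=
  sInf (ENNReal.ofReal '' {r : ℝ | 0 < r ∧ x ∈ r • A})

/-- The (one-sided) polar of a set `A ⊆ X`, as a subset of `Y`. -/
def polarSet {X Y : Type*} [AddCommGroup X] [Module ℝ X] [AddCommGroup Y] [Module ℝ Y]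
    (p : X →ₗ[ℝ] Y →ₗ[ℝ] ℝ) (A : Set X) : Set Y :=
  {y | ∀ x ∈ A, p x y ≤ 1}

/-- The polar transform of a `[0,∞]`-valued function `g`:
`g°(y) = inf{λ > 0 : ⟨x,y⟩ ≤ λ g(x) for all x}`, with `inf ∅ = +∞`. -/
noncomputable def polarTr {X Y : Type*} [AddCommGroup X] [Module ℝ X]
    [AddCommGroup Y] [Module ℝ Y] (p : X →ₗ[ℝ] Y →ₗ[ℝ] ℝ) (g : X → ℝ≥0∞) (y : Y) : ℝ≥0∞ :=
  sInf {l : ℝ≥0∞ | ∃ r : ℝ, 0 < r ∧ l = ENNReal.ofReal r ∧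
    ∀ x : X, (p x y : EReal) ≤ ((ENNReal.ofReal r * g x : ℝ≥0∞) : EReal)}

lemma mink_le_one {X : Type*} [AddCommGroup X] [Module ℝ X] {A : Set X} {x : X}
    (hx : x ∈ A) : mink A x ≤ 1 := by
  have : (1:ℝ≥0∞) ∈ ENNReal.ofReal '' {r : ℝ | 0 < r ∧ x ∈ r • A} := by
    refine ⟨1, ⟨one_pos, ?_⟩, by simp⟩
    simpa using hx
  exact sInf_le this

/-- Key equivalence for a fixed `r > 0`. -/
lemma key_equiv {X Y : Type*} [AddCommGroup X] [Module ℝ X]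
    [AddCommGroup Y] [Module ℝ Y] (p : X →ₗ[ℝ] Y →ₗ[ℝ] ℝ) (A : Set X) (y : Y)
    {r : ℝ} (hr : 0 < r) :
    (∀ x : X, (p x y : EReal) ≤ ((ENNReal.ofReal r * mink A x : ℝ≥0∞) : EReal)) ↔
      y ∈ r • polarSet p A := by
  rw [Set.mem_smul_set_iff_inv_smul_mem₀ hr.ne']
  constructor
  · intro h x hx
    have h1 := h x
    have h2 : ENNReal.ofReal r * mink A x ≤ ENNReal.ofReal r := by
      calc ENNReal.ofReal r * mink A x ≤ ENNReal.ofReal r * 1 :=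
            mul_le_mul_right (mink_le_one hx) _
        _ = ENNReal.ofReal r := mul_one _
    have h3 : (p x y : EReal) ≤ ((ENNReal.ofReal r : ℝ≥0∞) : EReal) :=
      h1.trans (EReal.coe_ennreal_le_coe_ennreal_iff.2 h2)
    rw [EReal.coe_ennreal_ofReal, max_eq_left hr.le] at h3
    have h4 : p x y ≤ r := EReal.coe_le_coe_iff.1 h3
    have : p x (r⁻¹ • y) = r⁻¹ * p x y := by simp
    rw [this, inv_mul_eq_div, div_le_one hr]
    exact h4
  · intro h x
    -- h : ∀ x ∈ A, p x (r⁻¹ • y) ≤ 1, i.e. p x y ≤ r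
    have hle : ∀ a ∈ A, p a y ≤ r := by
      intro a ha
      have := h a ha
      rw [map_smul, smul_eq_mul, inv_mul_eq_div, div_le_one hr] at this
      exact this
    rcases le_or_gt (p x y) 0 with hneg | hpos
    · calc (p x y : EReal) ≤ (0:EReal) := by exact_mod_cast hneg
        _ ≤ _ := EReal.coe_ennreal_nonneg _
    · have hENN : ENNReal.ofReal (p x y) ≤ ENNReal.ofReal r * mink A x := by
        rw [mul_comm, ← ENNReal.div_le_iff_le_mul (Or.inl (by positivity))
          (Or.inl ENNReal.ofReal_ne_top)]
        refine le_sInf ?_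
        rintro t ⟨s, ⟨hs, hxs⟩, rfl⟩
        rw [ENNReal.div_le_iff_le_mul (Or.inl (by positivity))
          (Or.inl ENNReal.ofReal_ne_top)]
        obtain ⟨a, ha, rfl⟩ := hxs
        have : p (s • a) y = s * p a y := by simp
        rw [this, ← ENNReal.ofReal_mul hs.le]
        exact ENNReal.ofReal_le_ofReal (mul_le_mul_of_nonneg_left (hle a ha) hs.le)
      calc (p x y : EReal) = ((ENNReal.ofReal (p x y) : ℝ≥0∞) : EReal) := by
            rw [EReal.coe_ennreal_ofReal, max_eq_left hpos.le]
        _ ≤ _ := EReal.coe_ennreal_le_coe_ennreal_iff.2 hENN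

/-- The polar transform of the Minkowski functional of `A` is the Minkowski functional of the
polar set `A°`. -/
theorem polarTr_mink {X Y : Type*} [AddCommGroup X] [Module ℝ X]
    [AddCommGroup Y] [Module ℝ Y] (p : X →ₗ[ℝ] Y →ₗ[ℝ] ℝ) (A : Set X) :
    polarTr p (mink A) = mink (polarSet p A) := by
  funext y
  unfold polarTr mink
  congr 1
  ext l
  simp only [Set.mem_setOf_eq, Set.mem_image]
  constructor
  · rintro ⟨r, hr, rfl, hcond⟩
    exact ⟨r, ⟨hr, (key_equiv p A y hr).1 hcond⟩, rfl⟩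
  · rintro ⟨r, ⟨hr, hy⟩, rfl⟩
    exact ⟨r, hr, rfl, (key_equiv p A y hr).2 hy⟩
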